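/- In the space X = ℓ1 equipped with its weak topology σ(ℓ1, ℓ∞), the canonical basis sequence (e_n) contains neither a weakly Cauchy subsequence nor a subsequence which is an ℓ1-sequence of the topological vector space (ℓ1, w). -/

import Mathlib

/-- Finitely supported elements of `ℓ¹`, with the `ℓ¹`-norm. -/
noncomputable def l10 : Submodule ℝ (lp (fun _ : ℕ => ℝ) 1) where
  carrier := {f | (Function.support (⇑f : ℕ → ℝ)).Finite}
  zero_mem' := by
    have : (Function.support (⇑(0 : lp (fun _ : ℕ => ℝ) 1) : ℕ → ℝ)) = ∅ := by
      rw [lp.coeFn_zero]; exact Function.support_zero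
    change (Function.support (⇑(0 : lp (fun _ : ℕ => ℝ) 1) : ℕ → ℝ)).Finite
    rw [this]; exact Set.finite_empty
  add_mem' := by
    intro a b ha hb
    refine Set.Finite.subset (ha.union hb) ?_
    intro n hn
    simp only [Set.mem_setOf_eq, Function.mem_support, lp.coeFn_add, Pi.add_apply] at hn
    by_contra h
    simp only [Set.mem_union, Function.mem_support, not_or, not_not] at h
    exact hn (by rw [h.1, h.2, add_zero])
  smul_mem' := by
    intro c a ha
    refine ha.subset ?_
    intro n hn
    simp only [Function.mem_support, lp.coeFn_smul, Pi.smul_apply, smul_eq_mul] at hn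
    exact Function.mem_support.2 fun h => hn (by rw [h, mul_zero])

/-- The canonical map `ℓ¹⁰ → X` determined by a sequence `x`. -/
noncomputable def T0 (X : Type*) [AddCommGroup X] [Module ℝ X] (x : ℕ → X) (a : l10) : X :=
  ∑ᶠ n, ((a : lp (fun _ : ℕ => ℝ) 1) : ℕ → ℝ) n • x n

/-- `x` is an ℓ¹-sequence: `T0` is an isomorphism (a homeomorphic embedding) onto its image. -/
def IsL1Sequence (X : Type*) [AddCommGroup X] [Module ℝ X] [TopologicalSpace X]
    (x : ℕ → X) : Prop :=
  Topology.IsEmbedding (T0 X x)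

noncomputable abbrev L1w := WeakSpace ℝ (lp (fun _ : ℕ => ℝ) 1)

/-- The canonical basis of ℓ¹, viewed in the weak space. -/
noncomputable def e (n : ℕ) : L1w :=
  (show lp (fun _ : ℕ => ℝ) 1 from lp.single 1 n (1 : ℝ))


/-!
Pairing with the `ℓ^∞` sequence equal to `(-1) ^ j` at `k j` (and `0` elsewhere) gives a weakly
continuous functional whose values on `e (k j)` oscillate, so no subsequence is weakly Cauchy.

A weak neighbourhood of `0` contains the common kernel of finitely many functionals. If the map
`ℓ¹⁰ → (ℓ¹, w)` were an embedding, the unit ball of `ℓ¹⁰` would contain the pull-back of such a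
kernel, a subspace of finite codimension; a subspace inside a ball is trivial, so `ℓ¹⁰` would be
finite-dimensional, which it is not.
-/

open Filter Topology

theorem not_tendsto_neg_one_pow (r : ℝ) : ¬ Tendsto (fun n : ℕ => (-1 : ℝ) ^ n) atTop (𝓝 r) := by
  intro h
  have hneg : Tendsto (fun n : ℕ => (-1 : ℝ) ^ n) atTop (𝓝 (-r)) := by
    simpa [pow_succ] using (h.comp (tendsto_add_atTop_nat 1)).neg
  have hr : r = 0 := by linarith [tendsto_nhds_unique h hneg]
  simpa [hr] using h.abs

theorem Submodule.eq_bot_of_subset_ball {𝕜 E : Type*} [NontriviallyNormedField 𝕜]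
    [NormedAddCommGroup E] [NormedSpace 𝕜 E] {K : Submodule 𝕜 E} {r : ℝ}
    (hK : (K : Set E) ⊆ Metric.ball 0 r) : K = ⊥ := by
  refine (Submodule.eq_bot_iff K).2 fun x hx => by_contra fun hx0 => ?_
  obtain ⟨c, hc⟩ := NormedField.exists_lt_norm 𝕜 (r / ‖x‖)
  have hcx : ‖c • x‖ < r := by simpa using hK (K.smul_mem c hx)
  rw [div_lt_iff₀ (norm_pos_iff.2 hx0), ← norm_smul] at hc
  exact hc.not_gt hcx

theorem exists_dual_lp_one_apply_single {ι α : Type*} [DecidableEq α] {k : ι → α}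
    (hk : Function.Injective k) {c : ι → ℝ} (hc : BddAbove (Set.range fun i => |c i|)) :
    ∃ φ : StrongDual ℝ (lp (fun _ : α => ℝ) 1), ∀ i, φ (lp.single 1 (k i) 1) = c i := by
  classical
  obtain ⟨C, hC⟩ := hc
  have hg : Memℓp (Function.extend k c 0) ⊤ := by
    refine memℓp_infty_iff.2 ⟨max C 0, Set.forall_mem_range.2 fun a => ?_⟩
    rw [Function.extend_def]
    split_ifs with h
    · exact le_max_of_le_left (hC ⟨_, rfl⟩)
    · simp
  refine ⟨lp.dualPairing ⊤ 1 (fun _ => ContinuousLinearMap.mul ℝ ℝ) (K := 1)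
    (fun _ => ((ContinuousLinearMap.opNorm_mul ℝ ℝ).trans NNReal.coe_one.symm).le)
    ⟨_, hg⟩, fun i => ?_⟩
  rw [lp.dualPairing_apply, tsum_eq_single (k i) fun a ha => by simp [ha]]
  simp [hk.extend_apply]

theorem WeakBilin.finiteDimensional_of_isInducing {𝕜 E F G : Type*} [NontriviallyNormedField 𝕜]
    [NormedAddCommGroup E] [NormedSpace 𝕜 E] [AddCommGroup F] [Module 𝕜 F] [AddCommGroup G]
    [Module 𝕜 G] {B : F →ₗ[𝕜] G →ₗ[𝕜] 𝕜} (T : E →ₗ[𝕜] WeakBilin B) (hT : IsInducing T) :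
    FiniteDimensional 𝕜 E := by
  obtain ⟨S, hS, hSball⟩ := Filter.mem_comap.1 <| by
    simpa only [hT.nhds_eq_comap, map_zero, nhds_induced, nhds_pi, Filter.comap_comap]
      using Metric.ball_mem_nhds (0 : E) one_pos
  obtain ⟨I, hI, U, hU, hIU⟩ := Filter.mem_pi.1 hS
  have : Finite I := hI
  let L : E →ₗ[𝕜] I → 𝕜 := LinearMap.pi fun y => (B.flip y).comp T
  have hker : LinearMap.ker L = ⊥ := by
    refine Submodule.eq_bot_of_subset_ball (r := 1) fun x hx => hSball (hIU fun y hy => ?_)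
    have hxy : B (T x) y = 0 := congrFun (LinearMap.mem_ker.1 hx) ⟨y, hy⟩
    convert mem_of_mem_nhds (hU y)
    exact hxy.trans (B.map_zero₂ y).symm
  exact Module.Finite.of_injective L (LinearMap.ker_eq_bot.1 hker)

theorem single_mem_l10 (i : ℕ) : lp.single 1 i (1 : ℝ) ∈ l10 :=
  (Set.finite_singleton i).subset fun _ hj => by_contra fun h => hj (lp.single_apply_ne 1 i 1 h)

theorem not_finiteDimensional_l10 : ¬ FiniteDimensional ℝ l10 := by
  intro _
  let ev : l10 →ₗ[ℝ] ℕ → ℝ := LinearMap.pi fun n => (lp.evalₗ (fun _ => ℝ) 1 n).comp l10.subtype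
  refine Module.Finite.not_linearIndependent_of_infinite (fun i => ⟨_, single_mem_l10 i⟩)
    (LinearIndependent.of_comp ev ?_)
  convert Pi.linearIndependent_single_one ℕ ℝ
  exact lp.coeFn_single 1 _ _

noncomputable def T0ₗ (X : Type*) [AddCommGroup X] [Module ℝ X] (x : ℕ → X) :
    l10 →ₗ[ℝ] X where
  toFun := T0 X x
  map_add' a b := by
    simp only [T0, Submodule.coe_add, lp.coeFn_add, Pi.add_apply, add_smul]
    exact finsum_add_distrib (a.2.subset (Function.support_smul_subset_left _ _))
      (b.2.subset (Function.support_smul_subset_left _ _))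
  map_smul' c a := by
    simp only [T0, Submodule.coe_smul, lp.coeFn_smul, Pi.smul_apply, smul_eq_mul, mul_smul,
      RingHom.id_apply]
    exact (smul_finsum' c (a.2.subset (Function.support_smul_subset_left _ _))).symm

theorem stmt15 (k : ℕ → ℕ) (hk : StrictMono k) :
    (¬ ∀ φ : L1w →L[ℝ] ℝ, ∃ r : ℝ,
        Filter.Tendsto (fun j => φ (e (k j))) Filter.atTop (nhds r)) ∧
      ¬ IsL1Sequence L1w (e ∘ k) := by
  refine ⟨fun hCauchy => ?_, fun hL1 => ?_⟩
  · obtain ⟨φ, hφ⟩ := exists_dual_lp_one_apply_single hk.injective (c := fun j => (-1 : ℝ) ^ j)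
      ⟨1, by rintro _ ⟨j, rfl⟩; simp⟩
    obtain ⟨r, hr⟩ := hCauchy (WeakBilin.eval _ φ)
    exact not_tendsto_neg_one_pow r (hr.congr hφ)
  · exact not_finiteDimensional_l10
      (WeakBilin.finiteDimensional_of_isInducing (T0ₗ L1w (e ∘ k)) hL1.isInducing)
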